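/- Suppose R_u is positive definite and 0 ≤ p < 1. Define the de-regularized cost J′(w) := E[(d − ūᵀ w)²] − wᵀ T w with T := p R_u + R_r, where R_r := −P₁ ⊙ R_u + p σ_ξ² I_M and P₁ = (2p−p²)𝟙𝟙ᵀ − (p−p²)I_M. Then for every w ∈ ℝ^M, J′(w) − J′(wᵒ) = (1−p)(w − wᵒ)ᵀ R_u (w − wᵒ); in particular J′ is strictly convex and wᵒ is its unique global minimizer. -/

import Mathlib

/-!
Expanding the square, `E[(d − ūᵀw)²] = E[d²] − 2 E[d ū]ᵀ w + wᵀ E[ū ūᵀ] w`. Since the indicators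
are independent of `(u, ξ)` and `u` is centred, the mixed `u`–`ξ` terms drop out and
`E[ūⁱ ūʲ] = E[(1 − fⁱ)(1 − fʲ)] R_u(i,j) + E[fⁱ fʲ] E[ξⁱ ξʲ]`, which is `(1 − p) R_u(i,i) + p σ_ξ²`
on the diagonal and `(1 − p)² R_u(i,j)` off it: exactly `T + (1 − p) R_u`. Likewise
`E[d ū] = (1 − p) R_u wᵒ`, as `v` is centred and independent of `ū`. Hence
`J′(w) = E[d²] − 2 (1 − p) wᵒᵀ R_u w + (1 − p) wᵀ R_u w`, which differs by a constant from the
positive definite quadratic form `(1 − p) (w − wᵒ)ᵀ R_u (w − wᵒ)`.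
-/

open MeasureTheory ProbabilityTheory Matrix
open scoped Matrix

/-- Index type for the mutually independent sources: the `M` indicator variables `fʲ`,
the regressor `u`, and the perturbation `ξ`. -/
inductive MissIdx (M : ℕ) where
  | F : Fin M → MissIdx M
  | U : MissIdx M
  | Xi : MissIdx M

/-- Codomain of each of the independent sources. -/
def MissIdx.type (M : ℕ) : MissIdx M → Type
  | .F _ => ℝ
  | .U => Fin M → ℝ
  | .Xi => Fin M → ℝ

instance (M : ℕ) (i : MissIdx M) : MeasurableSpace (MissIdx.type M i) :=
  match i with
  | .F _ => (inferInstance : MeasurableSpace ℝ)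
  | .U => (inferInstance : MeasurableSpace (Fin M → ℝ))
  | .Xi => (inferInstance : MeasurableSpace (Fin M → ℝ))

/-- The family of random variables indexed by `MissIdx`. -/
def missFun {Ω : Type*} (M : ℕ) (f : Fin M → Ω → ℝ) (u ξ : Ω → Fin M → ℝ) :
    (i : MissIdx M) → Ω → MissIdx.type M i
  | .F j => f j
  | .U => u
  | .Xi => ξ

/-- The censored regressor `ū = (I_M − F)u + Fξ`. -/
noncomputable def censReg {Ω : Type*} (M : ℕ) (f : Fin M → Ω → ℝ) (u ξ : Ω → Fin M → ℝ)
    (ω : Ω) : Fin M → ℝ :=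
  ((1 : Matrix (Fin M) (Fin M) ℝ) - Matrix.diagonal (fun k => f k ω)) *ᵥ u ω
    + (Matrix.diagonal (fun k => f k ω)) *ᵥ ξ ω

/-- The all-ones matrix `𝟙𝟙ᵀ`. -/
noncomputable def onesMat (M : ℕ) : Matrix (Fin M) (Fin M) ℝ := Matrix.of fun _ _ => (1 : ℝ)

/-- The matrix `P₁ = (2p−p²)𝟙𝟙ᵀ − (p−p²)I_M`. -/
noncomputable def Pone (M : ℕ) (p : ℝ) : Matrix (Fin M) (Fin M) ℝ :=
  (2 * p - p ^ 2) • onesMat M - (p - p ^ 2) • (1 : Matrix (Fin M) (Fin M) ℝ)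

/-- The matrix `R_r := −P₁ ⊙ R_u + p σ_ξ² I_M`. -/
noncomputable def Rr (M : ℕ) (p σξ : ℝ) (Ru : Matrix (Fin M) (Fin M) ℝ) :
    Matrix (Fin M) (Fin M) ℝ :=
  -Matrix.hadamard (Pone M p) Ru + (p * σξ ^ 2) • (1 : Matrix (Fin M) (Fin M) ℝ)

open scoped ENNReal

section QuadraticForm

variable {ι : Type*} [Fintype ι]

theorem Matrix.IsSymm.sub_dotProduct_mulVec_sub {R : Type*} [CommRing R] {Q : Matrix ι ι R}
    (hQ : Q.IsSymm) (x y : ι → R) :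
    (x - y) ⬝ᵥ (Q *ᵥ (x - y)) = x ⬝ᵥ (Q *ᵥ x) - 2 * (y ⬝ᵥ (Q *ᵥ x)) + y ⬝ᵥ (Q *ᵥ y) := by
  have hswap : x ⬝ᵥ (Q *ᵥ y) = y ⬝ᵥ (Q *ᵥ x) := by
    rw [dotProduct_mulVec, ← mulVec_transpose, hQ.eq, dotProduct_comm]
  simp only [mulVec_sub, dotProduct_sub, sub_dotProduct]
  linear_combination -hswap

theorem Matrix.dotProduct_mulVec_smul_add_smul {R : Type*} [CommRing R] (Q : Matrix ι ι R)
    (x y : ι → R) {a b : R} (hab : a + b = 1) :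
    (a • x + b • y) ⬝ᵥ (Q *ᵥ (a • x + b • y))
      = a * (x ⬝ᵥ (Q *ᵥ x)) + b * (y ⬝ᵥ (Q *ᵥ y)) - a * b * ((x - y) ⬝ᵥ (Q *ᵥ (x - y))) := by
  simp only [mulVec_add, mulVec_sub, mulVec_smul, dotProduct_add, dotProduct_sub, add_dotProduct,
    sub_dotProduct, dotProduct_smul, smul_dotProduct, smul_eq_mul]
  linear_combination (a * (x ⬝ᵥ (Q *ᵥ x)) + b * (y ⬝ᵥ (Q *ᵥ y))) * hab

theorem Matrix.PosDef.strictConvexOn_dotProduct_mulVec_sub {Q : Matrix ι ι ℝ} (hQ : Q.PosDef)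
    (x₀ : ι → ℝ) : StrictConvexOn ℝ Set.univ fun x => (x - x₀) ⬝ᵥ (Q *ᵥ (x - x₀)) := by
  refine ⟨convex_univ, fun x _ y _ hxy a b ha hb hab => ?_⟩
  have hcomb : a • x + b • y - x₀ = a • (x - x₀) + b • (y - x₀) := by
    linear_combination (norm := module) hab • x₀
  have hpos : 0 < ((x - x₀) - (y - x₀)) ⬝ᵥ (Q *ᵥ ((x - x₀) - (y - x₀))) := by
    simpa using hQ.dotProduct_mulVec_pos (sub_ne_zero.mpr hxy)
  simp only [smul_eq_mul, hcomb, Q.dotProduct_mulVec_smul_add_smul _ _ hab]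
  linarith [mul_pos (mul_pos ha hb) hpos]

end QuadraticForm

section SecondMoments

variable {Ω : Type*} [MeasurableSpace Ω] {μ : Measure Ω}

noncomputable def secondMoment {ι : Type*} (μ : Measure Ω) (X : Ω → ι → ℝ) : Matrix ι ι ℝ :=
  Matrix.of fun i j => ∫ ω, X ω i * X ω j ∂μ

noncomputable def crossMoment {ι : Type*} (μ : Measure Ω) (Y : Ω → ℝ) (X : Ω → ι → ℝ) :
    ι → ℝ :=
  fun i => ∫ ω, Y ω * X ω i ∂μ

theorem integral_sub_dotProduct_sq {ι : Type*} [Fintype ι] {X : Ω → ι → ℝ} {Y : Ω → ℝ}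
    (hX : ∀ i, MemLp (fun ω => X ω i) 2 μ) (hY : MemLp Y 2 μ) (w : ι → ℝ) :
    ∫ ω, (Y ω - X ω ⬝ᵥ w) ^ 2 ∂μ
      = ∫ ω, Y ω ^ 2 ∂μ - 2 * (crossMoment μ Y X ⬝ᵥ w) + w ⬝ᵥ (secondMoment μ X *ᵥ w) := by
  have hYX : ∀ i, Integrable (fun ω => Y ω * X ω i * w i) μ :=
    fun i => (hY.integrable_mul (hX i)).mul_const _
  have hXX : ∀ i j, Integrable (fun ω => w i * (X ω i * X ω j * w j)) μ :=
    fun i j => (((hX i).integrable_mul (hX j)).mul_const _).const_mul _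
  have hYY : Integrable (fun ω => Y ω ^ 2) μ := hY.integrable_sq
  have hlin : Integrable (fun ω => 2 * ∑ i, Y ω * X ω i * w i) μ :=
    (integrable_finsetSum _ fun i _ => hYX i).const_mul 2
  have hquad : Integrable (fun ω => ∑ i, ∑ j, w i * (X ω i * X ω j * w j)) μ :=
    integrable_finsetSum _ fun i _ => integrable_finsetSum _ fun j _ => hXX i j
  have hexpand : ∀ ω, (Y ω - X ω ⬝ᵥ w) ^ 2
      = Y ω ^ 2 - 2 * ∑ i, Y ω * X ω i * w i + ∑ i, ∑ j, w i * (X ω i * X ω j * w j) := by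
    intro ω
    rw [dotProduct, sub_sq, sq (∑ i, _), Finset.sum_mul_sum, Finset.mul_sum, Finset.mul_sum]
    congr 1
    · congr 1
      exact Finset.sum_congr rfl fun i _ => by ring
    · exact Finset.sum_congr rfl fun i _ => Finset.sum_congr rfl fun j _ => by ring
  rw [integral_congr_ae (.of_forall hexpand), integral_add (hYY.sub' hlin) hquad,
    integral_sub hYY hlin, integral_const_mul, integral_finsetSum _ fun i _ => hYX i,
    integral_finsetSum _ fun i _ => integrable_finsetSum _ fun j _ => hXX i j]
  simp only [integral_finsetSum _ fun j _ => hXX _ j, integral_const_mul, integral_mul_const,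
    crossMoment, secondMoment, dotProduct, mulVec, of_apply, Finset.mul_sum]

theorem memLp_top_of_zero_or_one {g : Ω → ℝ} (hg : Measurable g)
    (h01 : ∀ ω, g ω = 0 ∨ g ω = 1) : MemLp g ∞ μ :=
  memLp_top_of_bound hg.aestronglyMeasurable 1
    (ae_of_all _ fun ω => by rcases h01 ω with h | h <;> simp [h])

theorem integral_one_sub_of_zero_or_one [IsProbabilityMeasure μ] {g : Ω → ℝ} (hg : Measurable g)
    (h01 : ∀ ω, g ω = 0 ∨ g ω = 1) : ∫ ω, (1 - g ω) ∂μ = 1 - ∫ ω, g ω ∂μ := by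
  rw [integral_sub (integrable_const 1) ((memLp_top_of_zero_or_one hg h01).integrable le_top),
    integral_const, probReal_univ, one_smul]

end SecondMoments

theorem Pone_apply (M : ℕ) (p : ℝ) (i j : Fin M) :
    Pone M p i j = if i = j then p else 2 * p - p ^ 2 := by
  by_cases hij : i = j
  · simp only [Pone, onesMat, hij, Matrix.sub_apply, Matrix.smul_apply, of_apply, one_apply_eq,
      smul_eq_mul, if_true]
    ring
  · simp [Pone, onesMat, hij]

theorem Rr_apply (M : ℕ) (p σξ : ℝ) (Ru : Matrix (Fin M) (Fin M) ℝ) (i j : Fin M) :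
    Rr M p σξ Ru i j = -(Pone M p i j * Ru i j) + if i = j then p * σξ ^ 2 else 0 := by
  simp [Rr, one_apply]

theorem censReg_apply {Ω : Type*} {M : ℕ} {f : Fin M → Ω → ℝ} {u ξ : Ω → Fin M → ℝ} (ω : Ω)
    (i : Fin M) : censReg M f u ξ ω i = (1 - f i ω) * u ω i + f i ω * ξ ω i := by
  simp only [censReg, sub_mulVec, one_mulVec, mulVec_diagonal, Pi.add_apply, Pi.sub_apply]
  ring

section CensoredRegressor

variable {Ω : Type*} [MeasurableSpace Ω] {μ : Measure Ω} {M : ℕ} {f : Fin M → Ω → ℝ}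
  {u ξ : Ω → Fin M → ℝ}

theorem measurable_missFun (hf : ∀ j, Measurable (f j)) (hu : Measurable u)
    (hξ : Measurable ξ) : ∀ k, Measurable (missFun M f u ξ k)
  | .F j => hf j
  | .U => hu
  | .Xi => hξ

theorem indepFun_indicatorPair_regressorNoise (hindep : iIndepFun (missFun M f u ξ) μ)
    (hf : ∀ j, Measurable (f j)) (hu : Measurable u) (hξ : Measurable ξ) (i j : Fin M) :
    IndepFun (fun ω => (f i ω, f j ω)) (fun ω => (u ω, ξ ω)) μ :=
  hindep.indepFun_prodMk_prodMk (measurable_missFun hf hu hξ) (.F i) (.F j) .U .Xi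
    nofun nofun nofun nofun

theorem indepFun_indicator_indicator (hindep : iIndepFun (missFun M f u ξ) μ) {i j : Fin M}
    (hij : i ≠ j) : IndepFun (f i) (f j) μ :=
  hindep.indepFun (i := .F i) (j := .F j) fun h => hij (MissIdx.F.inj h)

theorem integral_regressor_mul_noise (hindep : iIndepFun (missFun M f u ξ) μ)
    (huL2 : ∀ i, MemLp (fun ω => u ω i) 2 μ) (hξL2 : ∀ i, MemLp (fun ω => ξ ω i) 2 μ)
    (humean : ∀ i, ∫ ω, u ω i ∂μ = 0) (k l : Fin M) : ∫ ω, u ω k * ξ ω l ∂μ = 0 := calc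
  _ = (∫ ω, u ω k ∂μ) * ∫ ω, ξ ω l ∂μ :=
    ((hindep.indepFun (i := .U) (j := .Xi) nofun).comp (measurable_pi_apply k)
      (measurable_pi_apply l)).integral_fun_mul_eq_mul_integral (huL2 k).1 (hξL2 l).1
  _ = 0 := by rw [humean, zero_mul]

theorem integral_indicatorPair_mul_regressorNoise (hindep : iIndepFun (missFun M f u ξ) μ)
    (hf : ∀ j, Measurable (f j)) (hu : Measurable u) (hξ : Measurable ξ) (i j : Fin M)
    {φ : ℝ × ℝ → ℝ} {ψ : (Fin M → ℝ) × (Fin M → ℝ) → ℝ} (hφ : Measurable φ) (hψ : Measurable ψ) :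
    ∫ ω, φ (f i ω, f j ω) * ψ (u ω, ξ ω) ∂μ
      = (∫ ω, φ (f i ω, f j ω) ∂μ) * ∫ ω, ψ (u ω, ξ ω) ∂μ :=
  (indepFun_indicatorPair_regressorNoise hindep hf hu hξ i j).integral_fun_comp_mul_comp
    ((hf i).prodMk (hf j)).aemeasurable (hu.prodMk hξ).aemeasurable hφ.aestronglyMeasurable
    hψ.aestronglyMeasurable

theorem integral_one_sub_mul_one_sub [IsProbabilityMeasure μ]
    (hindep : iIndepFun (missFun M f u ξ) μ) (hf : ∀ j, Measurable (f j))
    (hf01 : ∀ j ω, f j ω = 0 ∨ f j ω = 1) {p : ℝ} (hEf : ∀ j, ∫ ω, f j ω ∂μ = p) (i j : Fin M) :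
    ∫ ω, (1 - f i ω) * (1 - f j ω) ∂μ = if i = j then 1 - p else (1 - p) ^ 2 := by
  have hE : ∀ k, ∫ ω, (1 - f k ω) ∂μ = 1 - p := fun k => by
    rw [integral_one_sub_of_zero_or_one (hf k) (hf01 k), hEf]
  split_ifs with hij
  · subst hij
    rw [← hE i]
    congr 1 with ω
    rcases hf01 i ω with h | h <;> simp [h]
  · calc ∫ ω, (1 - f i ω) * (1 - f j ω) ∂μ = (∫ ω, (1 - f i ω) ∂μ) * ∫ ω, (1 - f j ω) ∂μ :=
          ((indepFun_indicator_indicator hindep hij).comp (φ := fun x => 1 - x)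
            (ψ := fun x => 1 - x) (by fun_prop) (by fun_prop)).integral_fun_mul_eq_mul_integral
            ((hf i).const_sub 1).aestronglyMeasurable ((hf j).const_sub 1).aestronglyMeasurable
      _ = (1 - p) ^ 2 := by rw [hE, hE, sq]

theorem memLp_censReg (hf : ∀ j, Measurable (f j)) (hf01 : ∀ j ω, f j ω = 0 ∨ f j ω = 1)
    (huL2 : ∀ i, MemLp (fun ω => u ω i) 2 μ) (hξL2 : ∀ i, MemLp (fun ω => ξ ω i) 2 μ)
    (i : Fin M) : MemLp (fun ω => censReg M f u ξ ω i) 2 μ := by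
  simp only [censReg_apply]
  have hfi := memLp_top_of_zero_or_one (μ := μ) (hf i) (hf01 i)
  exact ((huL2 i).mul' ((memLp_top_const 1).sub hfi)).add ((hξL2 i).mul' hfi)

theorem integral_censReg_mul_censReg (hindep : iIndepFun (missFun M f u ξ) μ)
    (hf : ∀ j, Measurable (f j)) (hf01 : ∀ j ω, f j ω = 0 ∨ f j ω = 1) (hu : Measurable u)
    (hξ : Measurable ξ) (huL2 : ∀ i, MemLp (fun ω => u ω i) 2 μ)
    (hξL2 : ∀ i, MemLp (fun ω => ξ ω i) 2 μ) (humean : ∀ i, ∫ ω, u ω i ∂μ = 0) (i j : Fin M) :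
    ∫ ω, censReg M f u ξ ω i * censReg M f u ξ ω j ∂μ
      = (∫ ω, (1 - f i ω) * (1 - f j ω) ∂μ) * (∫ ω, u ω i * u ω j ∂μ)
        + (∫ ω, f i ω * f j ω ∂μ) * ∫ ω, ξ ω i * ξ ω j ∂μ := by
  have hfinf : ∀ k, MemLp (f k) ∞ μ := fun k => memLp_top_of_zero_or_one (hf k) (hf01 k)
  have hginf : ∀ k, MemLp (fun ω => 1 - f k ω) ∞ μ := fun k => (memLp_top_const 1).sub (hfinf k)
  have huξ := integral_regressor_mul_noise hindep huL2 hξL2 humean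
  have hsplit : ∀ ω, censReg M f u ξ ω i * censReg M f u ξ ω j
      = (1 - f i ω) * (1 - f j ω) * (u ω i * u ω j) + (1 - f i ω) * f j ω * (u ω i * ξ ω j)
        + (f i ω * (1 - f j ω) * (u ω j * ξ ω i) + f i ω * f j ω * (ξ ω i * ξ ω j)) := by
    intro ω
    simp only [censReg_apply]
    ring
  have I1 : Integrable (fun ω => (1 - f i ω) * (1 - f j ω) * (u ω i * u ω j)) μ :=
    ((huL2 i).integrable_mul (huL2 j)).mul_of_top_right ((hginf j).mul (hginf i))
  have I2 : Integrable (fun ω => (1 - f i ω) * f j ω * (u ω i * ξ ω j)) μ :=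
    ((huL2 i).integrable_mul (hξL2 j)).mul_of_top_right ((hfinf j).mul (hginf i))
  have I3 : Integrable (fun ω => f i ω * (1 - f j ω) * (u ω j * ξ ω i)) μ :=
    ((huL2 j).integrable_mul (hξL2 i)).mul_of_top_right ((hginf j).mul (hfinf i))
  have I4 : Integrable (fun ω => f i ω * f j ω * (ξ ω i * ξ ω j)) μ :=
    ((hξL2 i).integrable_mul (hξL2 j)).mul_of_top_right ((hfinf j).mul (hfinf i))
  have hfactor := fun {φ ψ} =>
    integral_indicatorPair_mul_regressorNoise (μ := μ) hindep hf hu hξ i j (φ := φ) (ψ := ψ)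
  have E1 : ∫ ω, (1 - f i ω) * (1 - f j ω) * (u ω i * u ω j) ∂μ
      = (∫ ω, (1 - f i ω) * (1 - f j ω) ∂μ) * ∫ ω, u ω i * u ω j ∂μ :=
    hfactor (φ := fun s => (1 - s.1) * (1 - s.2)) (ψ := fun v => v.1 i * v.1 j) (by fun_prop)
      (by fun_prop)
  have E2 : ∫ ω, (1 - f i ω) * f j ω * (u ω i * ξ ω j) ∂μ = 0 := by
    rw [hfactor (φ := fun s => (1 - s.1) * s.2) (ψ := fun v => v.1 i * v.2 j) (by fun_prop)
      (by fun_prop), huξ, mul_zero]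
  have E3 : ∫ ω, f i ω * (1 - f j ω) * (u ω j * ξ ω i) ∂μ = 0 := by
    rw [hfactor (φ := fun s => s.1 * (1 - s.2)) (ψ := fun v => v.1 j * v.2 i) (by fun_prop)
      (by fun_prop), huξ, mul_zero]
  have E4 : ∫ ω, f i ω * f j ω * (ξ ω i * ξ ω j) ∂μ
      = (∫ ω, f i ω * f j ω ∂μ) * ∫ ω, ξ ω i * ξ ω j ∂μ :=
    hfactor (φ := fun s => s.1 * s.2) (ψ := fun v => v.2 i * v.2 j) (by fun_prop) (by fun_prop)
  rw [integral_congr_ae (.of_forall hsplit), integral_add (I1.fun_add I2) (I3.fun_add I4),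
    integral_add I1 I2, integral_add I3 I4, E1, E2, E3, E4, add_zero, zero_add]

theorem integral_regressor_mul_censReg (hindep : iIndepFun (missFun M f u ξ) μ)
    (hf : ∀ j, Measurable (f j)) (hf01 : ∀ j ω, f j ω = 0 ∨ f j ω = 1) (hu : Measurable u)
    (hξ : Measurable ξ) (huL2 : ∀ i, MemLp (fun ω => u ω i) 2 μ)
    (hξL2 : ∀ i, MemLp (fun ω => ξ ω i) 2 μ) (humean : ∀ i, ∫ ω, u ω i ∂μ = 0) (k i : Fin M) :
    ∫ ω, u ω k * censReg M f u ξ ω i ∂μ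
      = (∫ ω, (1 - f i ω) ∂μ) * ∫ ω, u ω k * u ω i ∂μ := by
  have hfinf : MemLp (f i) ∞ μ := memLp_top_of_zero_or_one (hf i) (hf01 i)
  have I1 : Integrable (fun ω => (1 - f i ω) * (u ω k * u ω i)) μ :=
    ((huL2 k).integrable_mul (huL2 i)).mul_of_top_right ((memLp_top_const 1).sub hfinf)
  have I2 : Integrable (fun ω => f i ω * (u ω k * ξ ω i)) μ :=
    ((huL2 k).integrable_mul (hξL2 i)).mul_of_top_right hfinf
  have hsplit : ∀ ω, u ω k * censReg M f u ξ ω i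
      = (1 - f i ω) * (u ω k * u ω i) + f i ω * (u ω k * ξ ω i) := by
    intro ω
    rw [censReg_apply]
    ring
  rw [integral_congr_ae (.of_forall hsplit), integral_add I1 I2,
    integral_indicatorPair_mul_regressorNoise hindep hf hu hξ i i (φ := fun s => 1 - s.1)
      (ψ := fun v => v.1 k * v.1 i) (by fun_prop) (by fun_prop),
    integral_indicatorPair_mul_regressorNoise hindep hf hu hξ i i (φ := fun s => s.1)
      (ψ := fun v => v.1 k * v.2 i) (by fun_prop) (by fun_prop),
    integral_regressor_mul_noise hindep huL2 hξL2 humean, mul_zero, add_zero]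

theorem integral_mul_censReg_of_indepFun {v : Ω → ℝ}
    (hvindep : IndepFun (fun ω => (u ω, (fun j => f j ω), ξ ω)) v μ)
    (hv : AEStronglyMeasurable v μ) (hvmean : ∫ ω, v ω ∂μ = 0) (hf : ∀ j, Measurable (f j))
    (hf01 : ∀ j ω, f j ω = 0 ∨ f j ω = 1) (huL2 : ∀ i, MemLp (fun ω => u ω i) 2 μ)
    (hξL2 : ∀ i, MemLp (fun ω => ξ ω i) 2 μ) (i : Fin M) :
    ∫ ω, v ω * censReg M f u ξ ω i ∂μ = 0 := by
  have hψ : Measurable fun t : (Fin M → ℝ) × (Fin M → ℝ) × (Fin M → ℝ) =>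
      (1 - t.2.1 i) * t.1 i + t.2.1 i * t.2.2 i := by fun_prop
  have hū := memLp_censReg hf hf01 huL2 hξL2 i
  simp only [censReg_apply] at hū ⊢
  calc _ = (∫ ω, v ω ∂μ) * ∫ ω, (1 - f i ω) * u ω i + f i ω * ξ ω i ∂μ :=
        (hvindep.comp hψ measurable_id).symm.integral_fun_mul_eq_mul_integral hv hū.1
    _ = 0 := by rw [hvmean, zero_mul]

theorem secondMoment_censReg [IsProbabilityMeasure μ] (hindep : iIndepFun (missFun M f u ξ) μ)
    (hf : ∀ j, Measurable (f j)) (hf01 : ∀ j ω, f j ω = 0 ∨ f j ω = 1) (hu : Measurable u)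
    (hξ : Measurable ξ) (huL2 : ∀ i, MemLp (fun ω => u ω i) 2 μ)
    (hξL2 : ∀ i, MemLp (fun ω => ξ ω i) 2 μ) (humean : ∀ i, ∫ ω, u ω i ∂μ = 0) {p σξ : ℝ}
    (hEf : ∀ j, ∫ ω, f j ω ∂μ = p) {Ru : Matrix (Fin M) (Fin M) ℝ}
    (hRu : ∀ i j, Ru i j = ∫ ω, u ω i * u ω j ∂μ)
    (hξcov : ∀ i j, ∫ ω, ξ ω i * ξ ω j ∂μ = if i = j then σξ ^ 2 else 0) :
    secondMoment μ (censReg M f u ξ) = p • Ru + Rr M p σξ Ru + (1 - p) • Ru := by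
  ext i j
  rw [secondMoment, of_apply, integral_censReg_mul_censReg hindep hf hf01 hu hξ huL2 hξL2 humean,
    integral_one_sub_mul_one_sub hindep hf hf01 hEf, ← hRu, hξcov, Matrix.add_apply,
    Matrix.add_apply, Rr_apply, Pone_apply, Matrix.smul_apply, Matrix.smul_apply, smul_eq_mul,
    smul_eq_mul]
  split_ifs with hij
  · subst hij
    have hff : ∫ ω, f i ω * f i ω ∂μ = p := by
      rw [← hEf i]
      congr 1 with ω
      rcases hf01 i ω with h | h <;> simp [h]
    rw [hff]
    ring
  · ring

theorem crossMoment_censReg [IsProbabilityMeasure μ] (hindep : iIndepFun (missFun M f u ξ) μ)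
    (hf : ∀ j, Measurable (f j)) (hf01 : ∀ j ω, f j ω = 0 ∨ f j ω = 1) (hu : Measurable u)
    (hξ : Measurable ξ) (huL2 : ∀ i, MemLp (fun ω => u ω i) 2 μ)
    (hξL2 : ∀ i, MemLp (fun ω => ξ ω i) 2 μ) (humean : ∀ i, ∫ ω, u ω i ∂μ = 0) {p : ℝ}
    (hEf : ∀ j, ∫ ω, f j ω ∂μ = p) {Ru : Matrix (Fin M) (Fin M) ℝ}
    (hRu : ∀ i j, Ru i j = ∫ ω, u ω i * u ω j ∂μ) {v : Ω → ℝ} (hvL2 : MemLp v 2 μ)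
    (hvmean : ∫ ω, v ω ∂μ = 0) (hvindep : IndepFun (fun ω => (u ω, (fun j => f j ω), ξ ω)) v μ)
    (wo : Fin M → ℝ) {d : Ω → ℝ} (hd : ∀ ω, d ω = u ω ⬝ᵥ wo + v ω) :
    crossMoment μ d (censReg M f u ξ) = (1 - p) • (wo ᵥ* Ru) := by
  funext i
  rw [crossMoment]
  have hū := memLp_censReg hf hf01 huL2 hξL2 i
  have hsplit : ∀ ω, d ω * censReg M f u ξ ω i
      = ∑ k, wo k * (u ω k * censReg M f u ξ ω i) + v ω * censReg M f u ξ ω i := by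
    intro ω
    rw [hd, dotProduct, add_mul, Finset.sum_mul]
    congr 1
    exact Finset.sum_congr rfl fun k _ => by ring
  have hint : ∀ k, Integrable (fun ω => wo k * (u ω k * censReg M f u ξ ω i)) μ :=
    fun k => ((huL2 k).integrable_mul hū).const_mul _
  have hvint : Integrable (fun ω => v ω * censReg M f u ξ ω i) μ := hvL2.integrable_mul hū
  rw [integral_congr_ae (.of_forall hsplit),
    integral_add (integrable_finsetSum _ fun k _ => hint k) hvint,
    integral_finsetSum _ fun k _ => hint k,
    integral_mul_censReg_of_indepFun hvindep hvL2.1 hvmean hf hf01 huL2 hξL2, add_zero]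
  simp only [integral_const_mul, integral_regressor_mul_censReg hindep hf hf01 hu hξ huL2 hξL2
    humean, integral_one_sub_of_zero_or_one (hf i) (hf01 i), hEf, ← hRu, Pi.smul_apply, vecMul,
    dotProduct, smul_eq_mul, Finset.mul_sum]
  exact Finset.sum_congr rfl fun k _ => by ring

end CensoredRegressor

theorem deregularized_cost_strictly_convex_general
    {Ω : Type*} [MeasurableSpace Ω] (μ : Measure Ω) [IsProbabilityMeasure μ]
    (M : ℕ) (p : ℝ) (hp0 : 0 ≤ p) (hp1 : p < 1) (σξ : ℝ)
    (u ξ : Ω → Fin M → ℝ) (f : Fin M → Ω → ℝ)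
    (humeas : Measurable u) (hξmeas : Measurable ξ) (hfmeas : ∀ j, Measurable (f j))
    (huL2 : ∀ i, MemLp (fun ω => u ω i) 2 μ) (hξL2 : ∀ i, MemLp (fun ω => ξ ω i) 2 μ)
    (humean : ∀ i, ∫ ω, u ω i ∂μ = 0)
    (Ru : Matrix (Fin M) (Fin M) ℝ)
    (hRu : ∀ i j, Ru i j = ∫ ω, u ω i * u ω j ∂μ)
    (hRuPD : Ru.PosDef)
    (hξcov : ∀ i j, ∫ ω, ξ ω i * ξ ω j ∂μ = if i = j then σξ ^ 2 else 0)
    (hf01 : ∀ j ω, f j ω = 0 ∨ f j ω = 1)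
    (hfp : ∀ j, μ {ω | f j ω = 1} = ENNReal.ofReal p)
    (hindep : iIndepFun (missFun M f u ξ) μ)
    (wo : Fin M → ℝ) (v : Ω → ℝ)
    (hvL2 : MemLp v 2 μ)
    (hvmean : ∫ ω, v ω ∂μ = 0)
    (hvindep : IndepFun (fun ω => (u ω, (fun j => f j ω), ξ ω)) v μ)
    (d : Ω → ℝ) (hd : ∀ ω, d ω = u ω ⬝ᵥ wo + v ω)
    (T : Matrix (Fin M) (Fin M) ℝ)
    (hT : T = p • Ru + Rr M p σξ Ru)
    (J' : (Fin M → ℝ) → ℝ)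
    (hJ' : ∀ w, J' w = (∫ ω, (d ω - censReg M f u ξ ω ⬝ᵥ w) ^ 2 ∂μ) - w ⬝ᵥ (T *ᵥ w)) :
    (∀ w : Fin M → ℝ,
        J' w - J' wo = (1 - p) * ((w - wo) ⬝ᵥ (Ru *ᵥ (w - wo))))
    ∧ StrictConvexOn ℝ Set.univ J'
    ∧ (∀ w : Fin M → ℝ, w ≠ wo → J' wo < J' w) := by
  have hq : 0 < 1 - p := sub_pos.mpr hp1
  have hEf : ∀ j, ∫ ω, f j ω ∂μ = p := fun j => by
    rw [integral_of_ae_eq_zero_or_one (hfmeas j).aemeasurable (ae_of_all _ (hf01 j)),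
      measureReal_def, hfp j, ENNReal.toReal_ofReal hp0]
  have hdL2 : MemLp d 2 μ := by
    rw [funext hd]
    exact (memLp_finsetSum _ fun k _ => (huL2 k).mul_const (wo k)).add hvL2
  have hJ : ∀ w, J' w = ∫ ω, d ω ^ 2 ∂μ - 2 * (1 - p) * (wo ⬝ᵥ (Ru *ᵥ w))
      + (1 - p) * (w ⬝ᵥ (Ru *ᵥ w)) := fun w => by
    rw [hJ', integral_sub_dotProduct_sq (memLp_censReg hfmeas hf01 huL2 hξL2) hdL2,
      secondMoment_censReg hindep hfmeas hf01 humeas hξmeas huL2 hξL2 humean hEf hRu hξcov,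
      crossMoment_censReg hindep hfmeas hf01 humeas hξmeas huL2 hξL2 humean hEf hRu hvL2 hvmean
        hvindep wo hd, hT]
    simp only [add_mulVec, smul_mulVec, dotProduct_add, dotProduct_smul, smul_dotProduct,
      smul_eq_mul, ← dotProduct_mulVec]
    ring
  have hdiff : ∀ w, J' w - J' wo = (1 - p) * ((w - wo) ⬝ᵥ (Ru *ᵥ (w - wo))) := fun w => by
    rw [hJ, hJ, (isHermitian_iff_isSymm.mp hRuPD.isHermitian).sub_dotProduct_mulVec_sub]
    ring
  refine ⟨hdiff, ?_, fun w hw => ?_⟩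
  · have hJ'eq : J' = fun w => (w - wo) ⬝ᵥ (((1 - p) • Ru) *ᵥ (w - wo)) + J' wo := by
      funext w
      rw [smul_mulVec, dotProduct_smul, smul_eq_mul, ← hdiff]
      ring
    rw [hJ'eq]
    exact ((hRuPD.smul hq).strictConvexOn_dotProduct_mulVec_sub wo).add_const _
  · have hpos : 0 < (w - wo) ⬝ᵥ (Ru *ᵥ (w - wo)) := by
      simpa using hRuPD.dotProduct_mulVec_pos (sub_ne_zero.mpr hw)
    linarith [hdiff w, mul_pos hq hpos]

/-- with `R_u` positive definite and `0 ≤ p < 1`, the de-regularized cost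
`J′(w) = E[(d − ūᵀ w)²] − wᵀ T w` with `T = p R_u + R_r` satisfies
`J′(w) − J′(wᵒ) = (1−p)(w − wᵒ)ᵀ R_u (w − wᵒ)`; in particular `J′` is strictly convex and
`wᵒ` is its unique global minimizer. -/
theorem deregularized_cost_strictly_convex
    {Ω : Type*} [MeasurableSpace Ω] (μ : Measure Ω) [IsProbabilityMeasure μ]
    (M : ℕ) (p : ℝ) (hp0 : 0 ≤ p) (hp1 : p < 1) (σξ : ℝ) (hσξ : 0 ≤ σξ)
    (u ξ : Ω → Fin M → ℝ) (f : Fin M → Ω → ℝ)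
    (humeas : Measurable u) (hξmeas : Measurable ξ) (hfmeas : ∀ j, Measurable (f j))
    (huL2 : ∀ i, MemLp (fun ω => u ω i) 2 μ) (hξL2 : ∀ i, MemLp (fun ω => ξ ω i) 2 μ)
    (humean : ∀ i, ∫ ω, u ω i ∂μ = 0) (hξmean : ∀ i, ∫ ω, ξ ω i ∂μ = 0)
    (Ru : Matrix (Fin M) (Fin M) ℝ)
    (hRu : ∀ i j, Ru i j = ∫ ω, u ω i * u ω j ∂μ)
    (hRuPD : Ru.PosDef)
    (hξcov : ∀ i j, ∫ ω, ξ ω i * ξ ω j ∂μ = if i = j then σξ ^ 2 else 0)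
    (hf01 : ∀ j ω, f j ω = 0 ∨ f j ω = 1)
    (hfp : ∀ j, μ {ω | f j ω = 1} = ENNReal.ofReal p)
    (hindep : iIndepFun (missFun M f u ξ) μ)
    (wo : Fin M → ℝ) (v : Ω → ℝ) (σv : ℝ)
    (hvmeas : Measurable v) (hvL2 : MemLp v 2 μ)
    (hvmean : ∫ ω, v ω ∂μ = 0) (hvvar : ∫ ω, (v ω) ^ 2 ∂μ = σv ^ 2)
    (hvindep : IndepFun (fun ω => (u ω, (fun j => f j ω), ξ ω)) v μ)
    (d : Ω → ℝ) (hd : ∀ ω, d ω = u ω ⬝ᵥ wo + v ω)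
    (T : Matrix (Fin M) (Fin M) ℝ)
    (hT : T = p • Ru + Rr M p σξ Ru)
    (J' : (Fin M → ℝ) → ℝ)
    (hJ' : ∀ w, J' w = (∫ ω, (d ω - censReg M f u ξ ω ⬝ᵥ w) ^ 2 ∂μ) - w ⬝ᵥ (T *ᵥ w)) :
    (∀ w : Fin M → ℝ,
        J' w - J' wo = (1 - p) * ((w - wo) ⬝ᵥ (Ru *ᵥ (w - wo))))
    ∧ StrictConvexOn ℝ Set.univ J'
    ∧ (∀ w : Fin M → ℝ, w ≠ wo → J' wo < J' w) :=
  deregularized_cost_strictly_convex_general μ M p hp0 hp1 σξ u ξ f humeas hξmeas hfmeas huL2 hξL2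
    humean Ru hRu hRuPD hξcov hf01 hfp hindep wo v hvL2 hvmean hvindep d hd T hT J' hJ'
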